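/- arXiv:2208.02736 — 3 statements merged into one kernel-verified Lean document; each statement's English description precedes it below -/
import Mathlib

section
/- For $m \geq 2$, the integer solutions $(k_1,\dots,k_{m-1}) \in \mathbb{Z}^{m-1}$ of the equation $m\sum_{i=1}^{m-1} k_i^2 - (\sum_{i=1}^{m-1} k_i)^2 = m-1$ are exactly the $2m$ vectors $\pm e_1, \dots, \pm e_{m-1}, \pm(1,1,\dots,1)$, where $e_i$ denotes the $i$-th standard basis vector. -/
/-!
Cauchy–Schwarz on the coordinates other than `t` gives `m x_t² ≤ 2 q(x)`, so on the quadric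
`q(x) = m - 1` every coordinate lies in `{-1, 0, 1}` and `Q = ∑ xᵢ²` is at most `n = m - 1`.
With `S = ∑ xᵢ` the equation reads `(Q - S)(Q + S) = (Q - 1)(Q - n)`. The left side is
nonnegative because `xᵢ² ≥ ± xᵢ` for integers, while the right side is negative for `1 < Q < n`,
and `Q = 0` forces `S = 0 = n`; hence `Q ∈ {1, n}` and `S = ± Q`. Equality in `xᵢ² ≥ ± xᵢ`
then makes `± x` a `0/1`-vector with `1` or `n` ones.
-/

open Finset

variable {ι : Type*} [Fintype ι]

/-- The form `m ∑ xᵢ² - (∑ xᵢ)²` on `R^{m-1}`, with `m - 1 = card ι`. -/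
def harveyLawsonForm {R : Type*} [CommRing R] (x : ι → R) : R :=
  (Fintype.card ι + 1) * ∑ i, x i ^ 2 - (∑ i, x i) ^ 2

@[simp]
lemma harveyLawsonForm_neg {R : Type*} [CommRing R] (x : ι → R) :
    harveyLawsonForm (-x) = harveyLawsonForm x := by
  simp [harveyLawsonForm, sum_neg_distrib]

lemma harveyLawsonForm_single [DecidableEq ι] {R : Type*} [CommRing R] (i : ι) :
    harveyLawsonForm (Pi.single i (1 : R)) = Fintype.card ι := by
  simp [harveyLawsonForm, Pi.single_apply]

lemma harveyLawsonForm_one {R : Type*} [CommRing R] :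
    harveyLawsonForm (1 : ι → R) = Fintype.card ι := by
  simp [harveyLawsonForm]
  ring

section Ordered

variable {R : Type*} [CommRing R] [LinearOrder R] [IsStrictOrderedRing R]

lemma add_two_mul_sq_le_of_sq_le_mul {d a T Q : R} (hd : 0 ≤ d) (hQ : 0 ≤ Q)
    (hTQ : T ^ 2 ≤ d * Q) : (d + 2) * a ^ 2 ≤ 2 * ((d + 2) * (a ^ 2 + Q) - (a + T) ^ 2) := by
  rcases hd.eq_or_lt with rfl | hd
  · obtain rfl : T = 0 := pow_eq_zero_iff two_ne_zero |>.mp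
      (le_antisymm (by simpa using hTQ) (sq_nonneg T))
    nlinarith
  · -- multiplied by `d`, the difference of the two sides is at least `(d a - 2 T)²`
    refine le_of_mul_le_mul_left ?_ hd
    nlinarith [sq_nonneg (d * a - 2 * T)]

lemma card_add_one_mul_sq_le_two_mul_harveyLawsonForm (x : ι → R) (t : ι) :
    (Fintype.card ι + 1) * x t ^ 2 ≤ 2 * harveyLawsonForm x := by
  classical
  have hcard : (Fintype.card ι : R) + 1 = #(univ.erase t) + 2 := by
    rw [← card_univ, ← card_erase_add_one (mem_univ t)]
    push_cast
    ring
  rw [harveyLawsonForm, hcard, ← add_sum_erase _ x (mem_univ t),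
    ← add_sum_erase _ (fun j => x j ^ 2) (mem_univ t)]
  exact add_two_mul_sq_le_of_sq_le_mul (Nat.cast_nonneg _)
    (sum_nonneg fun j _ => sq_nonneg (x j)) sq_sum_le_card_mul_sum_sq

end Ordered

section Integer

variable {x : ι → ℤ}

lemma sq_le_one_of_harveyLawsonForm_eq_card (h : harveyLawsonForm x = Fintype.card ι) (t : ι) :
    x t ^ 2 ≤ 1 := by
  have hbound := card_add_one_mul_sq_le_two_mul_harveyLawsonForm x t
  rw [h] at hbound
  by_contra! hlt
  nlinarith

lemma eq_one_or_eq_and_eq_or_eq_neg_of_mul_sub_sq_eq {n Q S : ℤ} (h : (n + 1) * Q - S ^ 2 = n)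
    (hSQ : S ≤ Q) (hQS : -Q ≤ S) (hQn : Q ≤ n) : (Q = 1 ∨ Q = n) ∧ (S = Q ∨ S = -Q) := by
  have key : (Q - S) * (Q + S) = (Q - 1) * (Q - n) := by linear_combination h
  have hQ : Q = 1 ∨ Q = n := by
    have : 0 ≤ (Q - 1) * (Q - n) := key ▸ mul_nonneg (by linarith) (by linarith)
    by_contra! hne
    rcases (by omega : Q = 0 ∨ 1 < Q) with rfl | hQ1
    · obtain rfl : S = 0 := by omega
      omega
    · nlinarith [lt_of_le_of_ne hQn hne.2]
  refine ⟨hQ, ?_⟩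
  have : (Q - S) * (Q + S) = 0 := by rcases hQ with rfl | rfl <;> simp [key]
  rcases mul_eq_zero.mp this with h | h
  · left; linarith
  · right; linarith

lemma eq_one_of_le_one_of_sum_eq_card (hx : ∀ i, x i ≤ 1) (h : ∑ i, x i = Fintype.card ι) :
    x = 1 := by
  have := (sum_eq_sum_iff_of_le fun i (_ : i ∈ univ) => hx i).mp (by simpa using h)
  exact funext fun i => this i (mem_univ i)

lemma exists_eq_single_of_nonneg_of_sum_eq_one [DecidableEq ι] (hx : 0 ≤ x)
    (h : ∑ i, x i = 1) : ∃ i, x = Pi.single i 1 := by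
  obtain ⟨i, -, hi⟩ : ∃ i ∈ univ, 0 < x i :=
    exists_lt_of_sum_lt (by simp [h] : ∑ i, (0 : ι → ℤ) i < ∑ i, x i)
  have hle : ∀ j ∈ univ, (Pi.single i 1 : ι → ℤ) j ≤ x j := fun j _ => by
    rcases eq_or_ne j i with rfl | hj
    · simpa using Int.add_one_le_of_lt hi
    · simpa [hj] using hx j
  have := (sum_eq_sum_iff_of_le hle).mp (by simp [h])
  exact ⟨i, funext fun j => (this j (mem_univ j)).symm⟩

lemma exists_eq_single_or_eq_one_of_sum_eq_sum_sq [DecidableEq ι]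
    (h : ∑ i, x i = ∑ i, x i ^ 2) (hQ : ∑ i, x i ^ 2 = 1 ∨ ∑ i, x i ^ 2 = Fintype.card ι) :
    (∃ i, x = Pi.single i 1) ∨ x = 1 := by
  have hsq := (sum_eq_sum_iff_of_le fun i (_ : i ∈ univ) => Int.le_self_sq (x i)).mp h
  have hx01 : ∀ i, 0 ≤ x i ∧ x i ≤ 1 := fun i => by
    have := hsq i (mem_univ i)
    constructor <;> nlinarith
  rw [← h] at hQ
  rcases hQ with hQ | hQ
  · exact .inl (exists_eq_single_of_nonneg_of_sum_eq_one (fun i => (hx01 i).1) hQ)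
  · exact .inr (eq_one_of_le_one_of_sum_eq_card (fun i => (hx01 i).2) hQ)

theorem harveyLawsonForm_eq_card_iff [DecidableEq ι] :
    harveyLawsonForm x = Fintype.card ι ↔
      (∃ i, x = Pi.single i 1) ∨ (∃ i, x = Pi.single i (-1)) ∨ x = 1 ∨ x = -1 := by
  constructor
  · intro h
    have hQn : ∑ i, x i ^ 2 ≤ Fintype.card ι := by
      simpa using sum_le_sum fun i (_ : i ∈ univ) => sq_le_one_of_harveyLawsonForm_eq_card h i
    have hSQ : ∑ i, x i ≤ ∑ i, x i ^ 2 := sum_le_sum fun i _ => Int.le_self_sq (x i)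
    have hQS : -∑ i, x i ^ 2 ≤ ∑ i, x i := by
      have := sum_le_sum fun i (_ : i ∈ univ) => Int.le_self_sq (-x i)
      simp only [sum_neg_distrib, even_two, Even.neg_pow] at this
      linarith
    obtain ⟨hQ, hS | hS⟩ := eq_one_or_eq_and_eq_or_eq_neg_of_mul_sub_sq_eq h hSQ hQS hQn
    · rcases exists_eq_single_or_eq_one_of_sum_eq_sum_sq hS hQ with hx | hx <;> tauto
    · have hneg : ∑ i, (-x) i = ∑ i, (-x) i ^ 2 := by simp [sum_neg_distrib, hS]
      rcases exists_eq_single_or_eq_one_of_sum_eq_sum_sq hneg (by simpa using hQ) with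
        ⟨i, hx⟩ | hx
      · exact .inr (.inl ⟨i, by rw [Pi.single_neg, ← hx, neg_neg]⟩)
      · exact .inr (.inr (.inr (neg_eq_iff_eq_neg.mp hx)))
  · rintro (⟨i, rfl⟩ | ⟨i, rfl⟩ | rfl | rfl)
    · exact harveyLawsonForm_single i
    · rw [Pi.single_neg, harveyLawsonForm_neg, harveyLawsonForm_single]
    · exact harveyLawsonForm_one
    · rw [harveyLawsonForm_neg, harveyLawsonForm_one]

end Integer

/-- For `m ≥ 2`, the integer solutions of `m ∑ kᵢ² - (∑ kᵢ)² = m - 1` on `ℤ^{m-1}` are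
exactly the `2m` vectors `± e₁, …, ± e_{m-1}, ±(1,…,1)`. -/
theorem stmt1 (m : ℕ) (hm : 2 ≤ m) (k : Fin (m - 1) → ℤ) :
    (m : ℤ) * (∑ i, (k i) ^ 2) - (∑ i, k i) ^ 2 = (m : ℤ) - 1 ↔
      (∃ i, k = fun j => if j = i then 1 else 0) ∨
      (∃ i, k = fun j => if j = i then -1 else 0) ∨
      (k = fun _ => 1) ∨ (k = fun _ => -1) := by
  have hm' : (m : ℤ) = (Fintype.card (Fin (m - 1)) : ℤ) + 1 := by
    rw [Fintype.card_fin]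
    omega
  have hsingle (i : Fin (m - 1)) (c : ℤ) : Pi.single i c = fun j => if j = i then c else 0 :=
    funext fun j => Pi.single_apply i c j
  rw [hm', add_sub_cancel_right, ← harveyLawsonForm, harveyLawsonForm_eq_card_iff]
  simp only [hsingle]
  rfl
end

section
/- Let $m \geq 2$ and let $(k_1,\dots,k_{m-1}) \in \mathbb{Z}^{m-1}$ satisfy $m\sum_{i=1}^{m-1} k_i^2 - (\sum_{i=1}^{m-1} k_i)^2 = m-1$. Write $\lambda = \frac{1}{m-1}\sum_{i=1}^{m-1} k_i$. Then $|\lambda| \leq 1$, each $k_i \in \{-1,0,1\}$, and each nonzero $k_i$ has the same sign as $\lambda$. -/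
/-! Put `n = m - 1`, `S = ∑ kᵢ`, `Q = ∑ kᵢ²` and `λ = S / n`. The hypothesis `(n + 1) Q - S² = n`
says exactly that the deviations from the mean satisfy `(n + 1) ∑ (kᵢ - λ)² = n (1 - λ²)`.
Hence `λ² ≤ 1`, and each single deviation obeys `(n + 1) (kᵢ - λ)² ≤ n (1 - λ²)`. An integer `kᵢ`
with `|kᵢ| ≥ 2`, or with `kᵢ = ±1` and `kᵢ λ ≤ 0`, has `(kᵢ - λ)² ≥ 1 - λ²` with room to spare
and violates this bound. -/

open Finset

theorem card_add_one_mul_sum_sq_sub_eq {ι : Type*} [Fintype ι] (x : ι → ℝ)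
    (hx : ((Fintype.card ι : ℝ) + 1) * ∑ j, x j ^ 2 - (∑ j, x j) ^ 2 = Fintype.card ι)
    (lam : ℝ) (hlam : lam = (∑ j, x j) / Fintype.card ι) :
    ((Fintype.card ι : ℝ) + 1) * ∑ j, (x j - lam) ^ 2 = Fintype.card ι * (1 - lam ^ 2) := by
  set n : ℝ := (Fintype.card ι : ℝ)
  have hsum : ∑ j, x j = n * lam := by
    cases isEmpty_or_nonempty ι
    · simp [n]
    · rw [hlam, mul_div_cancel₀ _ (by positivity)]
  have hexpand : ∑ j, (x j - lam) ^ 2 = ∑ j, x j ^ 2 - 2 * lam * ∑ j, x j + n * lam ^ 2 := by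
    simp only [sub_sq, sum_add_distrib, sum_sub_distrib, ← sum_mul, ← mul_sum, sum_const,
      card_univ, nsmul_eq_mul]
    ring
  rw [hexpand]
  linear_combination hx + (n * lam - 2 * (n + 1) * lam + ∑ j, x j) * hsum

section

variable {n lam : ℝ} (hn : 0 < n) {k : ℤ} (hk : (n + 1) * (k - lam) ^ 2 ≤ n * (1 - lam ^ 2))
include hn hk

theorem eq_neg_one_or_zero_or_one_of_card_add_one_mul_sq_sub_le :
    k = -1 ∨ k = 0 ∨ k = 1 := by
  have hlam : lam ^ 2 ≤ 1 := by nlinarith [sq_nonneg ((k : ℝ) - lam)]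
  suffices |(k : ℝ)| ≤ 1 by
    rcases Int.abs_le_one_iff.mp (by exact_mod_cast this) with h | h | h <;> simp [h]
  by_contra! hbig
  have hk2 : (2 : ℝ) ≤ |(k : ℝ)| := by
    have : (1 : ℤ) < |k| := by exact_mod_cast hbig
    exact_mod_cast this
  have hdev : 1 ≤ ((k : ℝ) - lam) ^ 2 := by
    rw [one_le_sq_iff_one_le_abs]
    linarith [abs_sub_abs_le_abs_sub (k : ℝ) lam, (sq_le_one_iff_abs_le_one lam).mp hlam]
  nlinarith

theorem pos_mul_of_card_add_one_mul_sq_sub_le (hk0 : k ≠ 0) : 0 < (k : ℝ) * lam := by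
  rcases eq_neg_one_or_zero_or_one_of_card_add_one_mul_sq_sub_le hn hk with h | h | h
  · subst h; push_cast at hk ⊢; nlinarith [sq_nonneg lam]
  · exact absurd h hk0
  · subst h; push_cast at hk ⊢; nlinarith [sq_nonneg lam]

end

/-- If `k ∈ ℤ^{m-1}` satisfies `m ∑ kᵢ² - (∑ kᵢ)² = m - 1` and `λ = (∑ kᵢ)/(m-1)`, then
`|λ| ≤ 1`, each `kᵢ ∈ {-1,0,1}`, and each nonzero `kᵢ` has the same sign as `λ`. -/
theorem stmt2 (m : ℕ) (hm : 2 ≤ m) (k : Fin (m - 1) → ℤ)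
    (hk : (m : ℤ) * (∑ i, (k i) ^ 2) - (∑ i, k i) ^ 2 = (m : ℤ) - 1)
    (lam : ℝ) (hlam : lam = (∑ i, (k i : ℝ)) / ((m : ℝ) - 1)) :
    |lam| ≤ 1 ∧ (∀ i, k i = -1 ∨ k i = 0 ∨ k i = 1) ∧
      ∀ i, k i ≠ 0 → 0 < (k i : ℝ) * lam := by
  have hcard : (Fintype.card (Fin (m - 1)) : ℝ) = m - 1 := by
    rw [Fintype.card_fin, Nat.cast_sub (by omega : 1 ≤ m), Nat.cast_one]
  have hpos : (0 : ℝ) < m - 1 := by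
    have : (2 : ℝ) ≤ m := by exact_mod_cast hm
    linarith
  have hdev := card_add_one_mul_sum_sq_sub_eq (fun i ↦ (k i : ℝ))
    (by rw [hcard, sub_add_cancel]; exact_mod_cast hk) lam (by rw [hcard]; exact hlam)
  rw [hcard, sub_add_cancel] at hdev
  have hpoint (i : Fin (m - 1)) :
      ((m : ℝ) - 1 + 1) * (k i - lam) ^ 2 ≤ (m - 1) * (1 - lam ^ 2) := by
    rw [sub_add_cancel, ← hdev]
    gcongr
    exact single_le_sum (f := fun j ↦ ((k j : ℝ) - lam) ^ 2) (fun j _ ↦ sq_nonneg _) (mem_univ i)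
  refine ⟨?_, fun i ↦ eq_neg_one_or_zero_or_one_of_card_add_one_mul_sq_sub_le hpos (hpoint i),
    fun i ↦ pos_mul_of_card_add_one_mul_sq_sub_le hpos (hpoint i)⟩
  rw [← sq_le_one_iff_abs_le_one]
  nlinarith [sum_nonneg fun j (_ : j ∈ univ) ↦ sq_nonneg ((k j : ℝ) - lam)]
end

section
/- Let $N$ be a smooth minimal submanifold of $\mathbb{R}^{2n}$ (identified with $\mathbb{C}^n$) which is Lagrangian, and suppose $\beta : N \to \mathbb{R}$ satisfies $d\beta = \frac{1}{2}\lambda|_N$ where $\lambda$ is the Liouville form. Then $\beta$ is harmonic on $N$: $\Delta_N \beta = 0$. -/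
open scoped BigOperators

private lemma contDiffOn_finset_prod {n : ℕ} {U : Set (Fin n → ℝ)} {ι : Type*}
    (s : Finset ι) (f : ι → (Fin n → ℝ) → ℝ)
    (h : ∀ i, ContDiffOn ℝ (⊤ : ℕ∞) (f i) U) :
    ContDiffOn ℝ (⊤ : ℕ∞) (fun y => ∏ i ∈ s, f i y) U := by
  classical
  induction s using Finset.induction_on with
  | empty => simpa using contDiffOn_const
  | insert _ _ hx ih =>
    simp only [Finset.prod_insert hx]
    exact (h _).mul ih

private lemma inner_expand {F : Type*} [NormedAddCommGroup F] [InnerProductSpace ℂ F]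
    {n : ℕ} (a : F) (r : ℝ) (c : Fin n → ℝ) (w : Fin n → F) :
    ((inner ℂ a (r • ∑ j, c j • w j) : ℂ)).re = r * ∑ j, c j * ((inner ℂ a (w j) : ℂ)).re := by
  rw [RCLike.real_smul_eq_coe_smul (K := ℂ) r, inner_smul_right,
    show (∑ j, c j • w j) = ∑ j, ((c j : ℂ)) • w j from
      Finset.sum_congr rfl fun j _ => RCLike.real_smul_eq_coe_smul (K := ℂ) _ _,
    inner_sum]
  simp only [inner_smul_right]
  norm_num [Complex.re_sum, Finset.mul_sum]

/-- Harmonicity of the primitive `β` of the Liouville form on a minimal Lagrangian, in a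
local parametrization.  Here `u : U → ℂⁿ` is a smooth immersed parametrization of `N` with
induced metric `g_{ij} = ⟨∂ᵢu, ∂ⱼu⟩` (real inner product), `ginv = g⁻¹`, the Lagrangian
condition reads `ω(∂ᵢu, ∂ⱼu) = Re⟨i ∂ᵢu, ∂ⱼu⟩ = 0`, minimality is the minimal surface
system `Δ_g u = 0` (in divergence form), and `b = β ∘ u` satisfies
`∂ᵢ b = ½ λ(∂ᵢ u) = ½ Re⟨i u, ∂ᵢu⟩`.  Conclusion: `Δ_g b = 0` (in divergence form),
i.e. `β` is harmonic on `N`. -/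
theorem stmt10 (n : ℕ) (U : Set (Fin n → ℝ)) (hU : IsOpen U)
    (u : (Fin n → ℝ) → EuclideanSpace ℂ (Fin n))
    (b : (Fin n → ℝ) → ℝ)
    (g ginv : (Fin n → ℝ) → Matrix (Fin n) (Fin n) ℝ)
    (hu : ContDiffOn ℝ (⊤ : ℕ∞) u U)
    (hb : ContDiffOn ℝ (⊤ : ℕ∞) b U)
    (hginv_smooth : ∀ i j, ContDiffOn ℝ (⊤ : ℕ∞) (fun x => ginv x i j) U)
    (hg : ∀ x ∈ U, ∀ i j, g x i j
      = (inner ℂ (fderiv ℝ u x (Pi.single i 1)) (fderiv ℝ u x (Pi.single j 1)) : ℂ).re)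
    (hdet : ∀ x ∈ U, 0 < (g x).det)
    (hinv : ∀ x ∈ U, g x * ginv x = 1)
    (hLag : ∀ x ∈ U, ∀ i j,
      (inner ℂ (Complex.I • fderiv ℝ u x (Pi.single i 1)) (fderiv ℝ u x (Pi.single j 1)) : ℂ).re = 0)
    (hmin : ∀ x ∈ U,
      ∑ i, fderiv ℝ
        (fun y => Real.sqrt (g y).det •
          ∑ j, ginv y i j • fderiv ℝ u y (Pi.single j 1)) x (Pi.single i 1) = 0)
    (hbeta : ∀ x ∈ U, ∀ i, fderiv ℝ b x (Pi.single i 1)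
      = (1 / 2) * (inner ℂ (Complex.I • u x) (fderiv ℝ u x (Pi.single i 1)) : ℂ).re) :
    ∀ x ∈ U,
      (1 / Real.sqrt (g x).det) *
        ∑ i, fderiv ℝ
          (fun y => Real.sqrt (g y).det *
            ∑ j, ginv y i j * fderiv ℝ b y (Pi.single j 1)) x (Pi.single i 1) = 0 := by
  classical
  intro x hx
  have hUx : U ∈ nhds x := hU.mem_nhds hx
  -- partial derivatives of u
  set W : Fin n → (Fin n → ℝ) → EuclideanSpace ℂ (Fin n) := fun j y => fderiv ℝ u y (Pi.single j 1) with hWdef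
  have hfder : ContDiffOn ℝ (⊤ : ℕ∞) (fderiv ℝ u) U := hu.fderiv_of_isOpen (m := (⊤ : ℕ∞)) hU (by simp)
  have hWsm : ∀ j, ContDiffOn ℝ (⊤ : ℕ∞) (W j) U := fun j =>
    hfder.clm_apply contDiffOn_const
  have dAt : ∀ {f : (Fin n → ℝ) → ℝ}, ContDiffOn ℝ (⊤ : ℕ∞) f U → DifferentiableAt ℝ f x :=
    fun h => (h.differentiableOn (by simp)).differentiableAt hUx
  have dAtE : ∀ {f : (Fin n → ℝ) → EuclideanSpace ℂ (Fin n)}, ContDiffOn ℝ (⊤ : ℕ∞) f U → DifferentiableAt ℝ f x :=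
    fun h => (h.differentiableOn (by simp)).differentiableAt hUx
  have hWd : ∀ j, DifferentiableAt ℝ (W j) x := fun j => dAtE (hWsm j)
  have hud : DifferentiableAt ℝ u x := dAtE hu
  have hginvd : ∀ i j, DifferentiableAt ℝ (fun y => ginv y i j) x :=
    fun i j => dAt (hginv_smooth i j)
  -- the smooth substitute for det g
  set D : (Fin n → ℝ) → ℝ :=
    fun y => (Matrix.of fun i j => ((inner ℂ (W i y) (W j y) : ℂ)).re).det with hDdef
  have hDU : ∀ y ∈ U, (g y).det = D y := by
    intro y hy
    congr 1
    ext i j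
    simpa using hg y hy i j
  have hDsm : ContDiffOn ℝ (⊤ : ℕ∞) D U := by
    have hentry : ∀ i j : Fin n, ContDiffOn ℝ (⊤ : ℕ∞) (fun y => ((inner ℂ (W i y) (W j y) : ℂ)).re) U :=
      fun i j => (Complex.reCLM.contDiff.comp_contDiffOn ((hWsm i).inner ℂ (hWsm j)))
    have : D = fun y => ∑ σ : Equiv.Perm (Fin n),
        ((Equiv.Perm.sign σ : ℤ) : ℝ) *
          ∏ i, ((inner ℂ (W (σ i) y) (W i y) : ℂ)).re := by
      funext y
      rw [hDdef]
      simp [Matrix.det_apply, Units.smul_def, zsmul_eq_mul]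
    rw [this]
    refine ContDiffOn.sum fun σ _ => ?_
    exact (contDiffOn_const).mul
      (contDiffOn_finset_prod _ _ fun i => hentry (σ i) i)
  have hDd : DifferentiableAt ℝ D x := dAt hDsm
  have hDx : D x ≠ 0 := by rw [← hDU x hx]; exact (hdet x hx).ne'
  have hsqrtd : DifferentiableAt ℝ (fun y => Real.sqrt (D y)) x := hDd.sqrt hDx
  -- the substitute vector fields
  set Vt : Fin n → (Fin n → ℝ) → EuclideanSpace ℂ (Fin n) :=
    fun i y => Real.sqrt (D y) • ∑ j, ginv y i j • W j y with hVtdef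
  have hVtd : ∀ i, DifferentiableAt ℝ (Vt i) x := by
    intro i
    exact hsqrtd.smul (DifferentiableAt.fun_sum fun j _ => (hginvd i j).smul (hWd j))
  have hVt_eq : ∀ i, (fun y => Real.sqrt (g y).det •
      ∑ j, ginv y i j • fderiv ℝ u y (Pi.single j 1)) =ᶠ[nhds x] Vt i := by
    intro i
    filter_upwards [hUx] with y hy
    rw [hVtdef]
    simp only [hDU y hy]
    rfl
  have hmin' : ∑ i, fderiv ℝ (Vt i) x (Pi.single i 1) = 0 := by
    have := hmin x hx
    rw [← this]
    refine Finset.sum_congr rfl fun i _ => ?_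
    rw [(hVt_eq i).fderiv_eq]
  -- I • u
  have hIud : DifferentiableAt ℝ (fun y => Complex.I • u y) x := hud.const_smul Complex.I
  have hIufd : fderiv ℝ (fun y => Complex.I • u y) x
      = Complex.I • fderiv ℝ u x := fderiv_const_smul hud Complex.I
  -- the harmonic quantity
  set h : Fin n → (Fin n → ℝ) → ℝ :=
    fun i y => (1 / 2) * ((inner ℂ (Complex.I • u y) (Vt i y) : ℂ)).re with hhdef
  have hfh : ∀ i, (fun y => Real.sqrt (g y).det *
      ∑ j, ginv y i j * fderiv ℝ b y (Pi.single j 1)) =ᶠ[nhds x] h i := by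
    intro i
    filter_upwards [hUx] with y hy
    rw [hhdef]
    simp only [hVtdef]
    rw [inner_expand]
    have : ∀ j, ginv y i j * fderiv ℝ b y (Pi.single j 1)
        = ginv y i j * ((1 / 2) * ((inner ℂ (Complex.I • u y) (W j y) : ℂ)).re) := by
      intro j
      rw [hbeta y hy j]
    rw [Finset.sum_congr rfl fun j _ => this j, ← hDU y hy]
    simp only [Finset.mul_sum]
    exact Finset.sum_congr rfl fun j _ => by ring
  -- compute the derivative of h i
  have hFd : ∀ i, DifferentiableAt ℝ (fun y => (inner ℂ (Complex.I • u y) (Vt i y) : ℂ)) x :=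
    fun i => hIud.inner ℂ (hVtd i)
  have hkey : ∀ i, fderiv ℝ (h i) x (Pi.single i 1)
      = (1 / 2) * ((inner ℂ (Complex.I • u x) (fderiv ℝ (Vt i) x (Pi.single i 1)) : ℂ)
          + (inner ℂ (Complex.I • (W i x)) (Vt i x) : ℂ)).re := by
    intro i
    rw [hhdef]
    have hre : DifferentiableAt ℝ
        (fun y => ((inner ℂ (Complex.I • u y) (Vt i y) : ℂ)).re) x :=
      (Complex.reCLM.differentiable.differentiableAt).comp x (hFd i)
    rw [fderiv_const_mul hre]
    simp only [ContinuousLinearMap.coe_smul', Pi.smul_apply, smul_eq_mul]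
    congr 1
    have h1 : fderiv ℝ (fun y => ((inner ℂ (Complex.I • u y) (Vt i y) : ℂ)).re) x
        = Complex.reCLM.comp (fderiv ℝ (fun y => (inner ℂ (Complex.I • u y) (Vt i y) : ℂ)) x) :=
      (Complex.reCLM.hasFDerivAt.comp x (hFd i).hasFDerivAt).fderiv
    rw [h1]
    simp only [ContinuousLinearMap.coe_comp', Function.comp_apply, Complex.reCLM_apply]
    congr 1
    rw [fderiv_inner_apply ℂ hIud (hVtd i) (Pi.single i 1)]
    congr 2
    rw [hIufd]
    simp
    rfl
  -- assemble
  have hsum : ∑ i, fderiv ℝ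
      (fun y => Real.sqrt (g y).det *
        ∑ j, ginv y i j * fderiv ℝ b y (Pi.single j 1)) x (Pi.single i 1) = 0 := by
    have heq : ∀ i, fderiv ℝ
        (fun y => Real.sqrt (g y).det *
          ∑ j, ginv y i j * fderiv ℝ b y (Pi.single j 1)) x (Pi.single i 1)
        = fderiv ℝ (h i) x (Pi.single i 1) := fun i => by rw [(hfh i).fderiv_eq]
    simp only [heq, hkey]
    rw [← Finset.mul_sum]
    have : ∑ i, ((inner ℂ (Complex.I • u x) (fderiv ℝ (Vt i) x (Pi.single i 1)) : ℂ)
          + (inner ℂ (Complex.I • (W i x)) (Vt i x) : ℂ)).re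
        = ((inner ℂ (Complex.I • u x)
            (∑ i, fderiv ℝ (Vt i) x (Pi.single i 1)) : ℂ)).re
          + ∑ i, ((inner ℂ (Complex.I • (W i x)) (Vt i x) : ℂ)).re := by
      simp only [Complex.add_re]
      rw [Finset.sum_add_distrib, inner_sum, Complex.re_sum]
    rw [this, hmin']
    have hzero : ∀ i, ((inner ℂ (Complex.I • (W i x)) (Vt i x) : ℂ)).re = 0 := by
      intro i
      rw [hVtdef]
      rw [inner_expand]
      have : ∀ j, ginv x i j * ((inner ℂ (Complex.I • (W i x)) (W j x) : ℂ)).re = 0 := by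
        intro j
        rw [hWdef]
        rw [hLag x hx i j, mul_zero]
      rw [Finset.sum_congr rfl fun j _ => this j]
      simp
    simp only [hzero, Finset.sum_const_zero, inner_zero_right, Complex.zero_re, add_zero,
      zero_add, mul_zero]
  rw [hsum, mul_zero]
end
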